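/- arXiv:2106.08179 — 2 statements merged into one kernel-verified Lean document; each statement's English description precedes it below -/
import Mathlib

section
/- A finite group of odd order has no nontrivial real-valued irreducible complex character; that is, if |G| is odd and χ is an irreducible complex character of G with χ real-valued, then χ is the trivial character. -/
open CategoryTheory

/-- `χ` is the character of an irreducible complex representation of `G`. -/
def IsIrrChar (G : Type) [Group G] (χ : G → ℂ) : Prop :=
  ∃ V : FDRep ℂ G, Simple V ∧ χ = V.character

/-- `χ` is real-valued. -/
def IsRealValued {G : Type} (χ : G → ℂ) : Prop := ∀ g, (χ g).im = 0

section Pieces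
open Polynomial Matrix

variable {d : Type*} [Fintype d] [DecidableEq d]

lemma eval_charpoly_eq_det (M : Matrix d d ℂ) (x : ℂ) :
    (M.charpoly).eval x = (x • (1 : Matrix d d ℂ) - M).det := by
  rw [charpoly, ← coe_evalRingHom, RingHom.map_det]
  congr 1
  ext i j
  simp only [charmatrix_apply, Matrix.map_apply, Matrix.sub_apply, Matrix.smul_apply,
    Matrix.one_apply, eval_sub, smul_eq_mul]
  rcases eq_or_ne i j with rfl | hij <;>
    simp [Matrix.diagonal_apply, *]

lemma root_pow_eq_one {M : Matrix d d ℂ} {n : ℕ} (hn : n ≠ 0) (h : M ^ n = 1)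
    {μ : ℂ} (hμ : μ ∈ M.charpoly.roots) : μ ^ n = 1 := by
  have hroot : (M.charpoly).eval μ = 0 := by
    exact (mem_roots (Matrix.charpoly_monic M).ne_zero).mp hμ
  rw [eval_charpoly_eq_det] at hroot
  obtain ⟨v, hv0, hv⟩ := (Matrix.exists_mulVec_eq_zero_iff).mpr hroot
  have hMv : M *ᵥ v = μ • v := by
    have := hv
    rw [Matrix.sub_mulVec, sub_eq_zero] at this
    rw [← this, Matrix.smul_mulVec, Matrix.one_mulVec]
  have hpow : ∀ k : ℕ, (M ^ k) *ᵥ v = μ ^ k • v := by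
    intro k
    induction k with
    | zero => simp
    | succ k ih =>
        rw [pow_succ, pow_succ, ← Matrix.mulVec_mulVec, hMv, Matrix.mulVec_smul, ih,
          smul_smul, mul_comm]
  have := hpow n
  rw [h, Matrix.one_mulVec] at this
  by_contra hne
  apply hv0
  have : (μ ^ n - 1) • v = 0 := by rw [sub_smul, one_smul, ← this, sub_self]
  have hsmul := smul_eq_zero.mp this
  rcases hsmul with h1 | h2
  · exact absurd (by linear_combination h1) hne
  · exact h2

lemma conj_eq_inv_of_pow_eq_one {μ : ℂ} {n : ℕ} (hn : n ≠ 0) (h : μ ^ n = 1) :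
    starRingEnd ℂ μ = μ⁻¹ := by
  have habs : ‖μ‖ = 1 := Complex.norm_eq_one_of_pow_eq_one h hn
  have hmc : starRingEnd ℂ μ * μ = 1 := by
    rw [mul_comm, Complex.mul_conj, Complex.normSq_eq_norm_sq, habs]; norm_num
  exact eq_inv_of_mul_eq_one_right (by rw [mul_comm] at hmc; exact hmc)

lemma trace_inv_eq_conj_trace {M N : Matrix d d ℂ} {n : ℕ} (hn : n ≠ 0)
    (h : M ^ n = 1) (hMN : M * N = 1) :
    N.trace = starRingEnd ℂ M.trace := by
  classical
  set R := M.charpoly.roots with hR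
  have hsplits : M.charpoly.Splits := IsAlgClosed.splits _
  have hcard : Multiset.card R = Fintype.card d := by
    rw [hR, (Polynomial.splits_iff_card_roots).mp hsplits, Matrix.charpoly_natDegree_eq_dim]
  have hrootpow : ∀ μ ∈ R, μ ^ n = 1 := fun μ hμ => root_pow_eq_one hn h hμ
  have hroot0 : ∀ μ ∈ R, μ ≠ 0 := by
    intro μ hμ h0
    have := hrootpow μ hμ
    rw [h0, zero_pow hn] at this
    exact zero_ne_one this
  have hNM : N * M = 1 := mul_eq_one_comm.mp hMN
  have hdetM : M.det = R.prod := by rw [hR]; exact Matrix.det_eq_prod_roots_charpoly (A := M)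
  have hRprod0 : R.prod ≠ 0 := Multiset.prod_ne_zero (fun h0 => hroot0 0 h0 rfl)
  have hdetN : N.det = R.prod⁻¹ := by
    have : M.det * N.det = 1 := by rw [← Matrix.det_mul, hMN, Matrix.det_one]
    rw [hdetM] at this
    field_simp at this ⊢
    linear_combination this
  -- the predicted characteristic polynomial of N
  set q : Polynomial ℂ := (R.map fun μ => Polynomial.X - Polynomial.C μ⁻¹).prod with hq
  have hinvprod : (R.map Inv.inv).prod = R.prod⁻¹ := by
    simpa using (map_multiset_prod (invMonoidHom : ℂ →* ℂ) R).symm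
  have hevalq : ∀ x : ℂ, q.eval x = (R.map fun μ => x - μ⁻¹).prod := by
    intro x
    rw [hq, ← coe_evalRingHom, map_multiset_prod, Multiset.map_map]
    congr 1
    apply Multiset.map_congr rfl
    intro μ _
    simp
  have hkey : N.charpoly = q := by
    apply Polynomial.funext
    intro x
    rw [eval_charpoly_eq_det, hevalq]
    have hfac : x • (1 : Matrix d d ℂ) - N = N * (x • M - 1) := by
      rw [Matrix.mul_sub, Matrix.mul_smul, hNM, Matrix.mul_one]
    rw [hfac, Matrix.det_mul, hdetN]
    rcases eq_or_ne x 0 with rfl | hx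
    · rw [zero_smul, zero_sub, Matrix.det_neg, Matrix.det_one, mul_one]
      have : (R.map fun μ => (0:ℂ) - μ⁻¹).prod
          = (-1) ^ Fintype.card d * R.prod⁻¹ := by
        rw [← hcard, ← hinvprod]
        have : (R.map fun μ : ℂ => (0:ℂ) - μ⁻¹).prod
            = (R.map fun μ : ℂ => (-1) * μ⁻¹).prod := by
          congr 1; apply Multiset.map_congr rfl; intro μ _; ring
        rw [this, Multiset.prod_map_mul, Multiset.map_const', Multiset.prod_replicate]
      rw [this]; ring
    · have h1 : x • M - 1 = x • (M - x⁻¹ • (1 : Matrix d d ℂ)) := by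
        rw [smul_sub, smul_smul, mul_inv_cancel₀ hx, one_smul]
      rw [h1, Matrix.det_smul, show M - x⁻¹ • (1 : Matrix d d ℂ)
          = -(x⁻¹ • (1 : Matrix d d ℂ) - M) from (neg_sub _ _).symm, Matrix.det_neg]
      have h3 : (x⁻¹ • (1 : Matrix d d ℂ) - M).det = (R.map fun μ => x⁻¹ - μ).prod := by
        rw [← eval_charpoly_eq_det]
        have hMc : M.charpoly = (R.map fun μ => Polynomial.X - Polynomial.C μ).prod :=
          hsplits.eq_prod_roots_of_monic (Matrix.charpoly_monic M)
        rw [hMc, ← coe_evalRingHom, map_multiset_prod, Multiset.map_map]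
        congr 1
        apply Multiset.map_congr rfl
        intro μ _
        simp
      rw [h3]
      have h4 : (R.map fun μ => x - μ⁻¹).prod
          = (R.map fun μ => (μ⁻¹ * (-x)) * (x⁻¹ - μ)).prod := by
        congr 1
        apply Multiset.map_congr rfl
        intro μ hμ
        have hμ0 := hroot0 μ hμ
        field_simp
        ring
      rw [h4, Multiset.prod_map_mul, Multiset.prod_map_mul, Multiset.map_const',
        Multiset.prod_replicate, hinvprod, hcard, neg_pow]
      field_simp
      ring
  have htrN : N.trace = (R.map Inv.inv).sum := by
    rw [show N.trace = N.charpoly.roots.sum from Matrix.trace_eq_sum_roots_charpoly (A := N),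
      hkey, hq]
    have : (Multiset.map (fun μ : ℂ => Polynomial.X - Polynomial.C μ⁻¹) R).prod
        = (Multiset.map (fun a : ℂ => Polynomial.X - Polynomial.C a) (R.map Inv.inv)).prod := by
      rw [Multiset.map_map]; rfl
    rw [this, Polynomial.roots_multiset_prod_X_sub_C]
  have htrM : M.trace = R.sum := by
    rw [hR]; exact Matrix.trace_eq_sum_roots_charpoly (A := M)
  rw [htrN, htrM, map_multiset_sum]
  have : Multiset.map (⇑(starRingEnd ℂ)) R = Multiset.map Inv.inv R :=
    Multiset.map_congr rfl (fun μ hμ => conj_eq_inv_of_pow_eq_one hn (hrootpow μ hμ))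
  rw [this]

open FDRep in
lemma character_inv_eq_conj {G : Type} [Group G] [Fintype G] (V : FDRep ℂ G) (g : G) :
    V.character g⁻¹ = starRingEnd ℂ (V.character g) := by
  classical
  let b := Module.finBasis ℂ V
  let e := LinearMap.toMatrixAlgEquiv b
  have hMN : e (V.ρ g) * e (V.ρ g⁻¹) = 1 := by
    rw [← _root_.map_mul, ← _root_.map_mul, mul_inv_cancel, _root_.map_one, _root_.map_one]
  have hpow : e (V.ρ g) ^ Fintype.card G = 1 := by
    rw [← map_pow, ← map_pow, pow_card_eq_one, _root_.map_one, _root_.map_one]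
  have hn : Fintype.card G ≠ 0 := Fintype.card_ne_zero
  have h1 : V.character g⁻¹ = (e (V.ρ g⁻¹)).trace := by
    rw [FDRep.character, LinearMap.trace_eq_matrix_trace ℂ b]; rfl
  have h2 : V.character g = (e (V.ρ g)).trace := by
    rw [FDRep.character, LinearMap.trace_eq_matrix_trace ℂ b]; rfl
  rw [h1, h2]
  exact trace_inv_eq_conj_trace hn hpow hMN

open TensorProduct in
lemma trace_comm_comp_map {k V : Type*} [Field k] [AddCommGroup V] [Module k V]
    [FiniteDimensional k V] (A : V →ₗ[k] V) :
    LinearMap.trace k (V ⊗[k] V)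
      ((TensorProduct.comm k V V).toLinearMap ∘ₗ TensorProduct.map A A)
      = LinearMap.trace k V (A ∘ₗ A) := by
  classical
  let b := Module.finBasis k V
  let bb := Module.Basis.tensorProduct b b
  rw [LinearMap.trace_eq_matrix_trace k bb, LinearMap.trace_eq_matrix_trace k b,
    LinearMap.toMatrix_comp b b b]
  rw [Matrix.trace, Matrix.trace]
  simp only [Matrix.diag_apply, Matrix.mul_apply, LinearMap.toMatrix_apply,
    LinearMap.coe_comp, Function.comp_apply, LinearEquiv.coe_coe]
  rw [Fintype.sum_prod_type]
  simp only [bb, Module.Basis.tensorProduct_apply, TensorProduct.map_tmul, TensorProduct.comm_tmul,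
    Module.Basis.tensorProduct_repr_tmul_apply]
  rw [Finset.sum_comm]
  exact Finset.sum_congr rfl fun i _ => Finset.sum_congr rfl fun j _ => smul_eq_mul _ _

end Pieces

open TensorProduct Representation FDRep in
theorem odd_order_no_real_irr_char (G : Type) [Group G] [Fintype G]
    (hodd : Odd (Fintype.card G)) (χ : G → ℂ)
    (hχ : IsIrrChar G χ) (hreal : IsRealValued χ) :
    χ = fun _ => 1 := by
  classical
  obtain ⟨V, hsimple, rfl⟩ := hχ
  haveI := hsimple
  haveI : Invertible ((Fintype.card G : ℂ)) :=
    invertibleOfNonzero (Nat.cast_ne_zero.mpr Fintype.card_ne_zero)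
  have hcard0 : (Fintype.card G : ℂ) ≠ 0 := Nat.cast_ne_zero.mpr Fintype.card_ne_zero
  -- χ(g⁻¹) = χ(g)
  have hconj : ∀ g : G, V.character g⁻¹ = V.character g := by
    intro g
    rw [character_inv_eq_conj V g]
    exact Complex.conj_eq_iff_im.mpr (hreal g)
  -- orthonormality : ∑ χ(g) χ(g⁻¹) = |G|
  have horth : ∑ g : G, V.character g * V.character g⁻¹ = (Fintype.card G : ℂ) := by
    letI : Fintype G := (inferInstance : Fintype G)
    letI : Invertible ((Nat.card G : ℂ)) :=
      invertibleOfNonzero (by rw [Nat.card_eq_fintype_card]; exact hcard0)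
    have h0 := FDRep.char_orthonormal (k := ℂ) (G := G) V V
    rw [if_pos ⟨Iso.refl V⟩] at h0
    have h : ⅟(Fintype.card G : ℂ) • ∑ g : G, V.character g * V.character g⁻¹ = 1 := by
      simpa [invOf_eq_inv, Nat.card_eq_fintype_card] using h0
    calc ∑ g : G, V.character g * V.character g⁻¹
        = (Fintype.card G : ℂ) • (⅟(Fintype.card G : ℂ) •
            ∑ g : G, V.character g * V.character g⁻¹) := by
          rw [smul_smul, mul_invOf_self, one_smul]
      _ = (Fintype.card G : ℂ) := by rw [h, smul_eq_mul, mul_one]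
  have hsq : ∑ g : G, V.character g * V.character g = (Fintype.card G : ℂ) := by
    rw [← horth]
    exact Finset.sum_congr rfl fun g _ => by rw [hconj]
  -- tensor square representation
  set σ : Representation ℂ G (V ⊗[ℂ] V) := Representation.tprod V.ρ V.ρ with hσ
  have htrσ : ∀ g : G, LinearMap.trace ℂ _ (σ g) = V.character g * V.character g := by
    intro g
    rw [hσ, Representation.tprod_apply]
    exact LinearMap.trace_tensorProduct' (V.ρ g) (V.ρ g)
  set P : (V ⊗[ℂ] V) →ₗ[ℂ] (V ⊗[ℂ] V) := Representation.averageMap σ with hPdef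
  have hP : LinearMap.IsProj σ.invariants P := Representation.isProj_averageMap σ
  have hPsum : P = ⅟(Fintype.card G : ℂ) • ∑ g : G, σ g := by
    rw [hPdef]
    show Representation.asAlgebraHom σ (GroupAlgebra.average ℂ G) = _
    rw [GroupAlgebra.average, map_smul, map_sum]
    congr 1
    exact Finset.sum_congr rfl fun g _ => Representation.asAlgebraHom_of σ g
  have htraceP : LinearMap.trace ℂ _ P = (Module.finrank ℂ σ.invariants : ℂ) :=
    hP.trace
  have hfr1 : Module.finrank ℂ σ.invariants = 1 := by
    have h1 : LinearMap.trace ℂ _ P = 1 := by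
      rw [hPsum, map_smul, map_sum]
      have : ∑ g : G, LinearMap.trace ℂ _ (σ g) = (Fintype.card G : ℂ) := by
        rw [← hsq]; exact Finset.sum_congr rfl fun g _ => htrσ g
      rw [this, smul_eq_mul, invOf_mul_self]
    rw [htraceP] at h1
    exact_mod_cast h1
  -- swap operator
  set τ : (V ⊗[ℂ] V) →ₗ[ℂ] (V ⊗[ℂ] V) := (TensorProduct.comm ℂ V V).toLinearMap with hτ
  have hτcomm : ∀ g : G, τ ∘ₗ σ g = σ g ∘ₗ τ := by
    intro g
    apply TensorProduct.ext'
    intro x y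
    simp [hτ, hσ, Representation.tprod_apply]
  have hττ : τ ∘ₗ τ = LinearMap.id := by
    apply TensorProduct.ext'
    intro x y
    simp [hτ]
  have hτI : ∀ x ∈ σ.invariants, τ x ∈ σ.invariants := by
    intro x hx g
    have h1 := congrArg (fun f : (V ⊗[ℂ] V) →ₗ[ℂ] (V ⊗[ℂ] V) => f x) (hτcomm g)
    simp only [LinearMap.comp_apply] at h1
    rw [← h1, (Representation.mem_invariants σ x).mp hx g]
  let bI := Module.finBasisOfFinrankEq ℂ σ.invariants hfr1
  set w : V ⊗[ℂ] V := ((bI 0 : σ.invariants) : V ⊗[ℂ] V) with hwdef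
  have hwI : w ∈ σ.invariants := (bI 0).2
  have hw0 : w ≠ 0 := by
    simpa [hwdef] using bI.ne_zero 0
  have hrepr : ∀ v : σ.invariants, (v : V ⊗[ℂ] V) = bI.repr v 0 • w := by
    intro v
    conv_lhs => rw [← bI.sum_repr v]
    rw [Fin.sum_univ_one]
    rfl
  set c : ℂ := bI.repr ⟨τ w, hτI w hwI⟩ 0 with hcdef
  have hc : τ w = c • w := by
    have := hrepr ⟨τ w, hτI w hwI⟩
    simpa [hcdef] using this
  have hc2 : c * c = 1 := by
    have h1 : τ (τ w) = w := by
      have := congrArg (fun f : (V ⊗[ℂ] V) →ₗ[ℂ] (V ⊗[ℂ] V) => f w) hττ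
      simpa using this
    rw [hc, map_smul, hc, smul_smul] at h1
    have h2 : (c * c - 1) • w = 0 := by
      rw [sub_smul, one_smul, h1, sub_self]
    rcases smul_eq_zero.mp h2 with h3 | h3
    · linear_combination h3
    · exact absurd h3 hw0
  have hτP : τ ∘ₗ P = c • P := by
    apply LinearMap.ext
    intro x
    have hPx : P x ∈ σ.invariants := hP.map_mem x
    have h2 : P x = bI.repr ⟨P x, hPx⟩ 0 • w := hrepr ⟨P x, hPx⟩
    simp only [LinearMap.comp_apply, LinearMap.smul_apply]
    rw [h2, map_smul, hc, smul_smul, mul_comm, ← smul_smul]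
  have htp : LinearMap.trace ℂ _ (τ ∘ₗ P) = c := by
    rw [hτP, map_smul, htraceP, hfr1]
    simp
  -- sum of χ(g²) equals |G| * c
  have hterm : ∀ g : G, V.character (g * g) = LinearMap.trace ℂ _ (τ ∘ₗ σ g) := by
    intro g
    rw [hσ, Representation.tprod_apply, trace_comm_comp_map (V.ρ g)]
    rw [FDRep.character, map_mul]
    rfl
  have hsum2 : ∑ g : G, V.character (g * g) = (Fintype.card G : ℂ) * c := by
    rw [Finset.sum_congr rfl fun g _ => hterm g]
    have hcomp : ∀ g : G, τ ∘ₗ σ g = (LinearMap.llcomp ℂ _ _ _ τ) (σ g) := fun g => rfl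
    calc ∑ g : G, LinearMap.trace ℂ _ (τ ∘ₗ σ g)
        = LinearMap.trace ℂ _ ((LinearMap.llcomp ℂ _ _ _ τ) (∑ g : G, σ g)) := by
          rw [map_sum, map_sum]
          exact Finset.sum_congr rfl fun g _ => by rw [hcomp g]
      _ = LinearMap.trace ℂ _ (τ ∘ₗ ((Fintype.card G : ℂ) • P)) := by
          congr 1
          have hS : ∑ g : G, σ g = (Fintype.card G : ℂ) • P := by
            rw [hPsum, smul_smul, mul_invOf_self, one_smul]
          rw [hS]
          rfl
      _ = (Fintype.card G : ℂ) * c := by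
          rw [LinearMap.comp_smul, map_smul, htp, smul_eq_mul]
  -- reindex by squaring
  have hcop : (Nat.card G).Coprime 2 := by
    rw [Nat.card_eq_fintype_card]
    exact ((Nat.Prime.coprime_iff_not_dvd Nat.prime_two).mpr
      (fun h2 => (Nat.not_even_iff_odd.mpr hodd) ((even_iff_two_dvd).mpr h2))).symm
  have hsq2 : ∑ g : G, V.character (g * g) = ∑ g : G, V.character g := by
    rw [← Equiv.sum_comp (powCoprime hcop) V.character]
    exact Finset.sum_congr rfl fun g _ => congrArg V.character (by
      show g * g = g ^ 2
      rw [pow_two])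
  have havg := FDRep.average_char_eq_finrank_invariants V
  have hm : ((Module.finrank ℂ (Representation.invariants V.ρ) : ℂ)) = c := by
    rw [← havg, hsq2.symm.trans hsum2, Nat.card_eq_fintype_card, ← mul_assoc,
      inv_mul_cancel₀ hcard0, one_mul]
  have hc1 : c = 1 := by
    rcases mul_self_eq_one_iff.mp hc2 with h | h
    · exact h
    · exfalso
      rw [h] at hm
      have h4 : ((Module.finrank ℂ (Representation.invariants V.ρ) + 1 : ℕ) : ℂ) = 0 := by
        push_cast
        rw [hm]
        ring
      exact Nat.succ_ne_zero _ (Nat.cast_injective (h4.trans (Nat.cast_zero).symm))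
  have hminv : Module.finrank ℂ (Representation.invariants V.ρ) = 1 := by
    rw [hc1] at hm
    exact_mod_cast hm
  -- a nonzero invariant vector
  let bJ := Module.finBasisOfFinrankEq ℂ (Representation.invariants V.ρ) hminv
  set v : V := ((bJ 0 : Representation.invariants V.ρ) : V) with hvdef
  have hvmem : ∀ g : G, V.ρ g v = v := (Representation.mem_invariants V.ρ v).mp (bJ 0).2
  have hv0 : v ≠ 0 := by simpa [hvdef] using bJ.ne_zero 0
  -- the trivial representation
  let V₁ : FDRep ℂ G := FDRep.of (Representation.trivial ℂ (G := G) (V := ℂ))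
  let f0 : ℂ →ₗ[ℂ] V := LinearMap.toSpanSingleton ℂ V v
  let f : V₁ ⟶ V :=
    { hom := FGModuleCat.ofHom f0
      comm := fun g => by
        apply FGModuleCat.hom_ext
        apply LinearMap.ext
        intro x
        show f0 (Representation.trivial ℂ (G := G) (V := ℂ) g x) = V.ρ g (f0 x)
        rw [Representation.trivial_apply]
        show x • v = V.ρ g (x • v)
        rw [map_smul, hvmem] }
  have hf0 : f ≠ 0 := by
    intro h
    apply hv0
    have h1 : f.hom = 0 := by rw [h]; rfl
    have h2 : f0 = 0 := by have := congrArg (fun φ => φ.hom.hom) h1; exact this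
    calc v = f0 1 := by rw [LinearMap.toSpanSingleton_apply]; rw [one_smul]
      _ = 0 := by rw [h2]; rfl
  have hinj : Function.Injective f0 := by
    intro a b hab
    simp only [f0, LinearMap.toSpanSingleton_apply] at hab
    exact smul_left_injective ℂ hv0 hab
  haveI : Mono f := by
    apply (forget₂ (FDRep ℂ G) (FGModuleCat ℂ)).mono_of_mono_map
    exact ConcreteCategory.mono_of_injective _ (by exact hinj)
  haveI : IsIso f := isIso_of_mono_of_nonzero hf0
  have hiso : V₁.character = V.character := FDRep.char_iso (asIso f)
  funext g
  rw [← hiso]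
  show V₁.character g = 1
  rw [FDRep.character]
  have hρ : V₁.ρ g = LinearMap.id := by
    apply LinearMap.ext
    intro x
    show Representation.trivial ℂ (G := G) (V := ℂ) g x = x
    rw [Representation.trivial_apply]
  rw [hρ, LinearMap.trace_id]
  show ((Module.finrank ℂ ℂ : ℕ) : ℂ) = 1
  rw [Module.finrank_self, Nat.cast_one]
end

section
/- Let G be a finite group acting by automorphisms on a finite group M, with the action faithful or more generally with kernel C = C_G(M). For every element x ∈ G such that xC has order 2 in G/C, there exists a nontrivial irreducible complex character μ of M with μ^x = \bar{μ} (the complex conjugate character). -/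
open CategoryTheory

set_option linter.unusedSectionVars false

open Module

namespace InvolutionChar

variable {M : Type} [Group M] [Fintype M]

open Matrix LinearMap in
theorem conj_char (V : FDRep ℂ M) (m : M) :
    V.character m⁻¹ = (starRingEnd ℂ) (V.character m) := by
  classical
  set b := Module.finBasis ℂ V with hb
  set R : M → Matrix (Fin (finrank ℂ V)) (Fin (finrank ℂ V)) ℂ :=
    fun g => LinearMap.toMatrix b b (V.ρ g) with hR
  have hmul : ∀ a c : M, R (a * c) = R a * R c := by
    intro a c
    simp only [hR, map_mul V.ρ, LinearMap.toMatrix_mul b]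
  have hone : R 1 = 1 := by simp [hR, map_one V.ρ]
  have htr : ∀ g : M, V.character g = (R g).trace := fun g =>
    LinearMap.trace_eq_matrix_trace ℂ b _
  set B : Matrix (Fin (finrank ℂ V)) (Fin (finrank ℂ V)) ℂ := ∑ g : M, (R g)ᴴ * R g with hB
  have step1 : ∀ g : M, (R g)ᴴ * B * R g = B := by
    intro g
    have : (R g)ᴴ * B * R g = ∑ h : M, (R (h * g))ᴴ * R (h * g) := by
      rw [hB, Finset.mul_sum, Finset.sum_mul]
      refine Finset.sum_congr rfl fun h _ => ?_
      rw [hmul, conjTranspose_mul]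
      noncomm_ring
    rw [this, hB]
    exact Fintype.sum_equiv (Equiv.mulRight g) _ _ (fun h => rfl)
  have hBunit : IsUnit B := by
    have hinj : ∀ v, B *ᵥ v = 0 → v = 0 := by
      intro v hv
      have key : (0 : ℂ) = ∑ g : M, ∑ i, (Complex.normSq ((R g *ᵥ v) i) : ℂ) := by
        have : star v ⬝ᵥ (B *ᵥ v) = 0 := by rw [hv]; simp
        have hsum : B *ᵥ v = ∑ g : M, ((R g)ᴴ * R g) *ᵥ v := by
          funext i
          rw [hB]
          simp only [Matrix.mulVec, dotProduct, Matrix.sum_apply, Finset.sum_apply,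
            Finset.sum_mul]
          exact Finset.sum_comm
        rw [← this, hsum]
        have hdp : ∀ (w : Fin (finrank ℂ V) → ℂ) (f : M → Fin (finrank ℂ V) → ℂ),
            w ⬝ᵥ (∑ g : M, f g) = ∑ g : M, w ⬝ᵥ f g := by
          intro w f
          simp only [dotProduct, Finset.sum_apply, Finset.mul_sum]
          exact Finset.sum_comm
        rw [hdp]
        refine Finset.sum_congr rfl fun g _ => ?_
        rw [← Matrix.mulVec_mulVec, Matrix.dotProduct_mulVec, ← Matrix.star_mulVec]
        simp only [dotProduct]
        refine Finset.sum_congr rfl fun i _ => ?_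
        simp [Pi.star_apply, Complex.normSq_eq_conj_mul_self, Complex.star_def]
      have key2 : (0 : ℝ) = ∑ g : M, ∑ i, Complex.normSq ((R g *ᵥ v) i) := by
        have := key
        push_cast at this
        exact_mod_cast this
      have hnn : ∀ g : M, (0:ℝ) ≤ ∑ i, Complex.normSq ((R g *ᵥ v) i) := fun g =>
        Finset.sum_nonneg fun i _ => Complex.normSq_nonneg _
      have h1 : ∑ i, Complex.normSq ((R 1 *ᵥ v) i) = 0 := by
        have := (Finset.sum_eq_zero_iff_of_nonneg (fun g _ => hnn g)).mp key2.symm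
        exact this 1 (Finset.mem_univ _)
      rw [hone, Matrix.one_mulVec] at h1
      funext i
      have := (Finset.sum_eq_zero_iff_of_nonneg
        (fun i _ => Complex.normSq_nonneg (v i))).mp h1 i (Finset.mem_univ _)
      simpa using Complex.normSq_eq_zero.mp this
    have : Function.Injective (Matrix.toLinAlgEquiv' B) := by
      rw [← LinearMap.ker_eq_bot]
      apply LinearMap.ker_eq_bot'.mpr
      intro v hv
      apply hinj
      simpa [Matrix.toLinAlgEquiv'_apply] using hv
    have : IsUnit (Matrix.toLinAlgEquiv' B) :=
      (LinearMap.isUnit_iff_ker_eq_bot _).mpr (LinearMap.ker_eq_bot.mpr this)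
    have := this.map (Matrix.toLinAlgEquiv'.symm : _ ≃ₐ[ℂ] _)
    simpa using this
  obtain ⟨u, hu⟩ := hBunit
  have hrel : (R m)ᴴ * B = B * R m⁻¹ := by
    have := congrArg (· * R m⁻¹) (step1 m)
    rw [mul_assoc ((R m)ᴴ * B), ← hmul, mul_inv_cancel, hone, mul_one] at this
    exact this
  have htrace : ((R m)ᴴ).trace = (R m⁻¹).trace := by
    have h2 : (R m)ᴴ = B * R m⁻¹ * (↑u⁻¹ : Matrix _ _ ℂ) := by
      rw [← hrel, mul_assoc, ← hu, Units.mul_inv, mul_one]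
    rw [h2, Matrix.trace_mul_cycle, ← hu, Units.inv_mul, one_mul]
  rw [htr, htr, ← htrace, Matrix.trace_conjTranspose]
  rfl




/-- invariance of a subspace -/
def Invt (V : FDRep ℂ M) (p : Submodule ℂ V) : Prop :=
  ∀ (g : M) (v : V), v ∈ p → V.ρ g v ∈ p

/-- the subrepresentation on an invariant subspace -/
noncomputable def subρ (V : FDRep ℂ M) (p : Submodule ℂ V) (hp : Invt V p) : Representation ℂ M p where
  toFun g := (V.ρ g).restrict (fun x hx => hp g x hx)
  map_one' := by
    ext v
    simp [LinearMap.restrict_apply]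
  map_mul' g h := by
    ext v
    simp [LinearMap.restrict_apply]

noncomputable def subrep (V : FDRep ℂ M) (p : Submodule ℂ V) (hp : Invt V p) : FDRep ℂ M :=
  FDRep.of (subρ V p hp)

theorem hom_comm_apply' {Y W : FDRep ℂ M} (f : Y ⟶ W) (g : M) (y : Y) :
    f.hom (Y.ρ g y) = W.ρ g (f.hom y) :=
  by have := congrArg (fun t : Y.V ⟶ W.V => ConcreteCategory.hom t y) (f.comm g); exact this

theorem char_eq_trace (V : FDRep ℂ M) (g : M) :
    V.character g = LinearMap.trace ℂ V (V.ρ g) := rfl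

theorem subrep_char (V : FDRep ℂ M) (p : Submodule ℂ V) (hp : Invt V p) (g : M) :
    (subrep V p hp).character g = LinearMap.trace ℂ p (subρ V p hp g) := rfl

/-- Maschke -/
theorem exists_invt_compl (V : FDRep ℂ M) (p : Submodule ℂ V) (hp : Invt V p) :
    ∃ q : Submodule ℂ V, Invt V q ∧ IsCompl p q := by
  classical
  obtain ⟨q₀, hq₀⟩ := Submodule.exists_isCompl p
  set e0 : V →ₗ[ℂ] V := p.subtype ∘ₗ (p.projectionOnto q₀ hq₀) with he0
  have he0mem : ∀ v : V, e0 v ∈ p := fun v => (p.projectionOnto q₀ hq₀ v).2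
  have he0fix : ∀ v ∈ p, e0 v = v := by
    intro v hv
    have := Submodule.projectionOnto_apply_left hq₀ ⟨v, hv⟩
    simp [he0, this]
  set c : ℂ := (Fintype.card M : ℂ)⁻¹ with hc
  set e : V →ₗ[ℂ] V := c • ∑ g : M, (V.ρ g) ∘ₗ e0 ∘ₗ (V.ρ g⁻¹) with he
  have hcard : (Fintype.card M : ℂ) ≠ 0 := by
    exact_mod_cast Fintype.card_ne_zero
  have heapp : ∀ v : V, e v = c • ∑ g : M, V.ρ g (e0 (V.ρ g⁻¹ v)) := by
    intro v
    simp [he, LinearMap.sum_apply]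
  have hemem : ∀ v : V, e v ∈ p := by
    intro v
    rw [heapp]
    exact Submodule.smul_mem _ _ (Submodule.sum_mem _ fun g _ => hp g _ (he0mem _))
  have hefix : ∀ v ∈ p, e v = v := by
    intro v hv
    rw [heapp]
    have : ∀ g : M, V.ρ g (e0 (V.ρ g⁻¹ v)) = v := by
      intro g
      rw [he0fix _ (hp g⁻¹ v hv)]
      show (V.ρ g * V.ρ g⁻¹) v = v
      rw [← map_mul, mul_inv_cancel, map_one, Module.End.one_apply]
    rw [Finset.sum_congr rfl fun g _ => this g, Finset.sum_const, Finset.card_univ, hc]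
    rw [← Nat.cast_smul_eq_nsmul ℂ, smul_smul, inv_mul_cancel₀ hcard, one_smul]
  have hecomm : ∀ (h : M) (v : V), e (V.ρ h v) = V.ρ h (e v) := by
    intro h v
    rw [heapp, heapp, map_smul]
    congr 1
    rw [map_sum]
    refine Fintype.sum_equiv (Equiv.mulLeft h⁻¹) _ _ fun g => ?_
    simp only [Equiv.coe_mulLeft]
    have h1 : V.ρ g⁻¹ (V.ρ h v) = V.ρ ((h⁻¹ * g)⁻¹) v := by
      show (V.ρ g⁻¹ * V.ρ h) v = _
      rw [← map_mul, mul_inv_rev, inv_inv]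
    have h2 : ∀ w, V.ρ h (V.ρ (h⁻¹ * g) w) = V.ρ g w := by
      intro w
      show (V.ρ h * V.ρ (h⁻¹ * g)) w = _
      rw [← map_mul, mul_inv_cancel_left]
    rw [h1, h2]
  refine ⟨LinearMap.ker e, ?_, ?_⟩
  · intro g v hv
    simp only [LinearMap.mem_ker] at hv ⊢
    rw [hecomm, hv, map_zero]
  · constructor
    · rw [disjoint_iff_inf_le]
      rintro v ⟨hv1, hv2⟩
      have : e v = 0 := hv2
      rw [hefix v hv1] at this
      simp [this]
    · rw [codisjoint_iff_le_sup]
      intro v _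
      have h1 : e v ∈ p := hemem v
      have h2 : v - e v ∈ LinearMap.ker e := by
        rw [LinearMap.mem_ker, map_sub, hefix _ (hemem v), sub_self]
      have : v = e v + (v - e v) := by abel
      rw [this]
      exact Submodule.add_mem_sup h1 h2

theorem char_add_of_isCompl (V : FDRep ℂ M) {p q : Submodule ℂ V} (hp : Invt V p) (hq : Invt V q)
    (h : IsCompl p q) (g : M) :
    V.character g = (subrep V p hp).character g + (subrep V q hq).character g := by
  rw [char_eq_trace, subrep_char, subrep_char]
  set e := Submodule.prodEquivOfIsCompl p q h
  have : V.ρ g = e.conj (LinearMap.prodMap (subρ V p hp g) (subρ V q hq g)) := by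
    apply LinearMap.ext
    intro v
    obtain ⟨⟨a, b⟩, rfl⟩ := e.surjective v
    rw [LinearEquiv.conj_apply]
    simp only [LinearMap.comp_apply, LinearEquiv.coe_coe]
    rw [LinearEquiv.symm_apply_apply]
    have h1 : e (a, b) = (a : V) + (b : V) := rfl
    have h2 : e (subρ V p hp g a, subρ V q hq g b) =
        ((subρ V p hp g a : V) + (subρ V q hq g b : V)) := rfl
    rw [h1, LinearMap.prodMap_apply, h2, map_add]
    rfl
  rw [this, LinearMap.trace_conj', LinearMap.trace_prodMap']

/-- irreducibility implies categorical simplicity -/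
theorem simple_of_irred (V : FDRep ℂ M) (hne : finrank ℂ V ≠ 0)
    (hirr : ∀ p : Submodule ℂ V, Invt V p → p = ⊥ ∨ p = ⊤) : Simple V := by
  constructor
  intro Y f hf
  constructor
  · intro hiso hzero
    obtain ⟨g, hg1, hg2⟩ := hiso.out
    rw [hzero, Limits.comp_zero] at hg2
    have h1 : (0 : V ⟶ V) = 𝟙 V := hg2
    have h2 : ∀ v : V, v = 0 := by
      intro v
      have := congrArg (fun (t : V ⟶ V) => t.hom v) h1
      exact this.symm
    have : Subsingleton V := ⟨fun a b => by rw [h2 a, h2 b]⟩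
    exact hne (finrank_zero_iff.mpr this)
  · intro hnz
    -- kernel trivial
    have hker : ∀ y : Y, f.hom y = 0 → y = 0 := by
      intro y hy
      set K := LinearMap.ker (ConcreteCategory.hom f.hom : Y →ₗ[ℂ] V) with hK
      have hKinvt : Invt Y K := by
        intro g v hv
        show f.hom (Y.ρ g v) = 0
        have hv' : f.hom v = 0 := hv
        rw [hom_comm_apply' f g v, hv', map_zero]
      set ι : subrep Y K hKinvt ⟶ Y := ⟨ConcreteCategory.ofHom K.subtype, fun g => rfl⟩ with hι
      have hcomp : ι ≫ f = 0 := by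
        apply Action.Hom.ext
        rw [Action.comp_hom, Action.zero_hom]
        apply ConcreteCategory.hom_ext
        rintro ⟨v, hv⟩
        show f.hom v = (0 : K →ₗ[ℂ] V) ⟨v, hv⟩
        exact hv
      have hι0 : ι = 0 := CategoryTheory.Limits.zero_of_comp_mono f hcomp
      have := congrArg (fun (t : subrep Y K hKinvt ⟶ Y) => t.hom ⟨y, hy⟩) hι0
      exact this
    -- range is everything
    have hrange : LinearMap.range (ConcreteCategory.hom f.hom : Y →ₗ[ℂ] V) = ⊤ := by
      have hinv : Invt V (LinearMap.range (ConcreteCategory.hom f.hom : Y →ₗ[ℂ] V)) := by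
        rintro g v ⟨y, rfl⟩
        exact ⟨Y.ρ g y, hom_comm_apply' f g y⟩
      rcases hirr _ hinv with h | h
      · exfalso
        apply hnz
        apply Action.Hom.ext
        apply ConcreteCategory.hom_ext
        intro y
        have : f.hom y ∈ LinearMap.range (ConcreteCategory.hom f.hom : Y →ₗ[ℂ] V) := ⟨y, rfl⟩
        rw [h] at this
        exact (Submodule.mem_bot ℂ).mp this
      · exact h
    have hbij : Function.Bijective (ConcreteCategory.hom f.hom : Y →ₗ[ℂ] V) := by
      constructor
      · rw [← LinearMap.ker_eq_bot]
        apply LinearMap.ker_eq_bot'.mpr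
        exact fun y hy => hker y hy
      · rw [← LinearMap.range_eq_top]
        exact hrange
    set E := LinearEquiv.ofBijective (ConcreteCategory.hom f.hom : Y →ₗ[ℂ] V) hbij with hE
    have hfE : ∀ w, f.hom (E.symm w) = w := fun w => E.apply_symm_apply w
    refine ⟨⟨⟨ConcreteCategory.ofHom E.symm.toLinearMap, fun g => ?_⟩, ?_, ?_⟩⟩
    · apply ConcreteCategory.hom_ext
      intro v
      show E.symm (V.ρ g v) = Y.ρ g (E.symm v)
      apply hbij.1
      show f.hom (E.symm (V.ρ g v)) = f.hom (Y.ρ g (E.symm v))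
      rw [hom_comm_apply' f g (E.symm v), hfE, hfE]
    · apply Action.Hom.ext
      rw [Action.comp_hom, Action.id_hom]
      apply ConcreteCategory.hom_ext
      intro y
      show E.symm (f.hom y) = y
      exact E.symm_apply_apply y
    · apply Action.Hom.ext
      rw [Action.comp_hom, Action.id_hom]
      apply ConcreteCategory.hom_ext
      intro v
      show f.hom (E.symm v) = v
      exact E.apply_symm_apply v


open Matrix LinearMap in
set_option maxHeartbeats 1000000 in
theorem irred_case (σ : M →* M) (V : FDRep ℂ M)
    (hirr : ∀ p : Submodule ℂ V, Invt V p → p = ⊥ ∨ p = ⊤) :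
    (V.character ≠ (fun _ => 1) ∧ Simple V ∧
       ∀ m : M, V.character (σ m) = (starRingEnd ℂ) (V.character m)) ∨
    ∑ m : M, V.character (σ m * m) = ∑ m : M, V.character m := by
  classical
  set n := finrank ℂ V with hn
  set b : Basis (Fin n) ℂ V := Module.finBasis ℂ V with hb
  set R : M → Matrix (Fin n) (Fin n) ℂ := fun g => LinearMap.toMatrix b b (V.ρ g) with hR
  have hmul : ∀ a c : M, R (a * c) = R a * R c := by
    intro a c
    simp only [hR, map_mul V.ρ, LinearMap.toMatrix_mul b]
  have hone : R 1 = 1 := by simp [hR, map_one V.ρ]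
  have htr : ∀ g : M, V.character g = (R g).trace := fun g =>
    LinearMap.trace_eq_matrix_trace ℂ b _
  by_cases hF : ∃ F : Matrix (Fin n) (Fin n) ℂ, F ≠ 0 ∧ ∀ m : M, (R (σ m))ᵀ * F * R m = F
  · -- intertwiner exists: conjugate-symmetry of the character
    obtain ⟨F, hF0, hFrel⟩ := hF
    -- the kernel of `F` (transported to `V`) is invariant
    have hswap : ∀ g : M, F * R g = (R (σ g⁻¹))ᵀ * F := by
      intro g
      have h1 := hFrel g
      have h2 : (R (σ g⁻¹))ᵀ * ((R (σ g))ᵀ * F * R g) = (R (σ g⁻¹))ᵀ * F := by rw [h1]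
      have h3 : (R (σ g⁻¹))ᵀ * (R (σ g))ᵀ = 1 := by
        rw [← Matrix.transpose_mul, ← hmul, ← _root_.map_mul σ, mul_inv_cancel,
          _root_.map_one σ, hone, Matrix.transpose_one]
      calc F * R g = 1 * F * R g := by rw [Matrix.one_mul]
        _ = (R (σ g⁻¹))ᵀ * (R (σ g))ᵀ * F * R g := by rw [h3]
        _ = (R (σ g⁻¹))ᵀ * ((R (σ g))ᵀ * F * R g) := by noncomm_ring
        _ = (R (σ g⁻¹))ᵀ * F := h2
    set θ : V →ₗ[ℂ] (Fin n → ℂ) := F.mulVecLin ∘ₗ b.equivFun.toLinearMap with hθ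
    have hθapp : ∀ v : V, θ v = F *ᵥ (b.equivFun v) := fun v => rfl
    have hrepr : ∀ (g : M) (v : V), b.equivFun (V.ρ g v) = R g *ᵥ (b.equivFun v) := by
      intro g v
      show b.equivFun (V.ρ g v) = (LinearMap.toMatrix b b (V.ρ g)) *ᵥ b.equivFun v
      simp only [Basis.equivFun_apply]
      exact (LinearMap.toMatrix_mulVec_repr b b (V.ρ g) v).symm
    have hK : Invt V (LinearMap.ker θ) := by
      intro g v hv
      rw [LinearMap.mem_ker] at hv ⊢
      rw [hθapp, hrepr, Matrix.mulVec_mulVec, hswap g, ← Matrix.mulVec_mulVec,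
        ← hθapp v, hv, Matrix.mulVec_zero]
    have hKne : LinearMap.ker θ ≠ ⊤ := by
      intro htop
      apply hF0
      -- every column of F would vanish
      ext i j
      have : b j ∈ LinearMap.ker θ := htop ▸ Submodule.mem_top
      rw [LinearMap.mem_ker, hθapp] at this
      have hcol : b.equivFun (b j) = Pi.single j 1 := by
        funext i'
        rw [Basis.equivFun_apply, b.repr_self]
        rw [Finsupp.single_apply, Pi.single_apply]
        simp [eq_comm]
      rw [hcol] at this
      have := congrFun this i
      rw [Matrix.mulVec_single] at this
      simpa using this
    have hKbot : LinearMap.ker θ = ⊥ := (hirr _ hK).resolve_right hKne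
    have hFunit : IsUnit F := by
      have hinj : Function.Injective (Matrix.toLinAlgEquiv' F) := by
        rw [← LinearMap.ker_eq_bot]
        apply LinearMap.ker_eq_bot'.mpr
        intro w hw
        have : b.equivFun.symm w ∈ LinearMap.ker θ := by
          rw [LinearMap.mem_ker, hθapp, LinearEquiv.apply_symm_apply]
          simpa [Matrix.toLinAlgEquiv'_apply] using hw
        rw [hKbot, Submodule.mem_bot] at this
        have hw0 := congrArg b.equivFun this
        rwa [LinearEquiv.apply_symm_apply, map_zero] at hw0
      have : IsUnit (Matrix.toLinAlgEquiv' F) :=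
        (LinearMap.isUnit_iff_ker_eq_bot _).mpr (LinearMap.ker_eq_bot.mpr hinj)
      have := this.map (Matrix.toLinAlgEquiv'.symm : _ ≃ₐ[ℂ] _)
      simpa using this
    obtain ⟨u, hu⟩ := hFunit
    have hconj : ∀ m : M, V.character (σ m) = (starRingEnd ℂ) (V.character m) := by
      intro m
      rw [← conj_char]
      have h1 : (R (σ m))ᵀ * F = F * R m⁻¹ := by
        have := congrArg (· * R m⁻¹) (hFrel m)
        rw [mul_assoc ((R (σ m))ᵀ * F), ← hmul, mul_inv_cancel, hone, mul_one] at this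
        exact this
      have h2 : (R (σ m))ᵀ = F * R m⁻¹ * (↑u⁻¹ : Matrix _ _ ℂ) := by
        rw [← h1, mul_assoc, ← hu, Units.mul_inv, mul_one]
      rw [htr, htr, ← Matrix.trace_transpose (R (σ m)), h2, Matrix.trace_mul_cycle,
        ← hu, Units.inv_mul, one_mul]
    by_cases hχ : V.character = (fun _ => 1)
    · right
      rw [hχ]
    · left
      refine ⟨hχ, simple_of_irred V ?_ hirr, hconj⟩
      intro h0
      apply hF0
      have hie : IsEmpty (Fin n) := by rw [hn, h0]; exact Fin.isEmpty'
      ext i j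
      exact (hie.false i).elim
  · -- no intertwiner: both sums vanish
    right
    -- the averaging operator vanishes identically
    have hPhi : ∀ F : Matrix (Fin n) (Fin n) ℂ,
        (∑ m : M, (R (σ m))ᵀ * F * R m) = 0 := by
      intro F
      by_contra hne
      apply hF
      refine ⟨∑ m : M, (R (σ m))ᵀ * F * R m, hne, fun g => ?_⟩
      have key : (R (σ g))ᵀ * (∑ m : M, (R (σ m))ᵀ * F * R m) * R g =
          ∑ m : M, (R (σ (m * g)))ᵀ * F * R (m * g) := by
        rw [Finset.mul_sum, Finset.sum_mul]
        refine Finset.sum_congr rfl fun m _ => ?_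
        rw [_root_.map_mul σ, hmul, hmul, Matrix.transpose_mul]
        simp only [mul_assoc]
      rw [key]
      exact Fintype.sum_equiv (Equiv.mulRight g) _ _ fun m => rfl
    -- hence `S V = 0`
    have hentry : ∀ i j : Fin n, ∑ m : M, (R (σ m)) i j * (R m) j i = 0 := by
      intro i j
      have h0 := congrArg (fun A : Matrix (Fin n) (Fin n) ℂ => A j i)
        (hPhi (Matrix.single i j 1))
      simp only [Matrix.sum_apply, Matrix.zero_apply] at h0
      rw [← h0]
      refine Finset.sum_congr rfl fun m _ => ?_
      simp only [Matrix.mul_apply, Matrix.single, Matrix.transpose_apply, Matrix.of_apply,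
        ite_and, mul_ite, ite_mul, mul_one, one_mul, mul_zero, zero_mul, Finset.sum_ite_eq,
        Finset.sum_ite_eq', Finset.mem_univ, if_true]
    have hS : ∑ m : M, V.character (σ m * m) = 0 := by
      have hterm : ∀ m : M, V.character (σ m * m) =
          ∑ i : Fin n, ∑ j : Fin n, (R (σ m)) i j * (R m) j i := by
        intro m
        rw [htr, hmul]
        simp [Matrix.trace, Matrix.diag, Matrix.mul_apply]
      rw [Finset.sum_congr rfl fun m _ => hterm m, Finset.sum_comm]
      rw [Finset.sum_congr rfl fun i (_ : i ∈ Finset.univ) => Finset.sum_comm]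
      simp only [hentry, Finset.sum_const_zero]
    -- and `D V = 0`
    have hcard : (Fintype.card M : ℂ) ≠ 0 := by exact_mod_cast Fintype.card_ne_zero
    by_cases hv : ∃ v : V, v ≠ 0 ∧ ∀ g : M, V.ρ g v = v
    · -- the representation would be trivial, giving the identity intertwiner
      exfalso
      obtain ⟨v, hv0, hvfix⟩ := hv
      have hspan : Invt V (Submodule.span ℂ {v}) := by
        intro g w hw
        rw [Submodule.mem_span_singleton] at hw ⊢
        obtain ⟨c, rfl⟩ := hw
        exact ⟨c, by rw [_root_.map_smul, hvfix]⟩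
      have htop : Submodule.span ℂ {v} = ⊤ := by
        rcases hirr _ hspan with h | h
        · exfalso
          apply hv0
          have : v ∈ Submodule.span ℂ ({v} : Set V) := Submodule.mem_span_singleton_self v
          rw [h, Submodule.mem_bot] at this
          exact this
        · exact h
      have hfixall : ∀ (g : M) (w : V), V.ρ g w = w := by
        intro g w
        have hw : w ∈ Submodule.span ℂ ({v} : Set V) := htop ▸ Submodule.mem_top
        rw [Submodule.mem_span_singleton] at hw
        obtain ⟨c, rfl⟩ := hw
        rw [_root_.map_smul, hvfix]
      have hR1 : ∀ g : M, R g = 1 := by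
        intro g
        have : V.ρ g = LinearMap.id := LinearMap.ext fun w => hfixall g w
        rw [hR]
        simp only [this]
        exact LinearMap.toMatrix_id b
      have hnpos : 0 < n := hn ▸ finrank_pos_iff.mpr (nontrivial_of_ne v 0 hv0)
      apply hF
      refine ⟨1, ?_, fun m => by rw [hR1, hR1, Matrix.transpose_one, mul_one, mul_one]⟩
      intro h1
      have := congrFun (congrFun h1 ⟨0, hnpos⟩) ⟨0, hnpos⟩
      rw [Matrix.one_apply_eq, Matrix.zero_apply] at this
      exact one_ne_zero this
    · have hinv : Representation.invariants V.ρ = ⊥ := by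
        rw [eq_bot_iff]
        intro v hvmem
        rw [Submodule.mem_bot]
        by_contra hv0
        exact hv ⟨v, hv0, (Representation.mem_invariants _ v).mp hvmem⟩
      letI : Invertible (Fintype.card M : ℂ) := invertibleOfNonzero hcard
      have havg := FDRep.average_char_eq_finrank_invariants V
      rw [hinv] at havg
      have hD : ∑ m : M, V.character m = 0 := by
        have h0 : (⅟(Fintype.card M : ℂ)) • ∑ g : M, V.character g = 0 := by
          rw [invOf_eq_inv, smul_eq_mul, ← Nat.card_eq_fintype_card, havg]
          simp
        have := congrArg (fun z => (Fintype.card M : ℂ) • z) h0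
        simpa [smul_smul, mul_invOf_self] using this
      rw [hS, hD]


theorem subrep_finrank (V : FDRep ℂ M) (p : Submodule ℂ V) (hp : Invt V p) :
    finrank ℂ (subrep V p hp) = finrank ℂ p := rfl

theorem sum_char_eq (σ : M →* M)
    (H : ¬ ∃ W : FDRep ℂ M, Simple W ∧ W.character ≠ (fun _ => 1) ∧
      ∀ m : M, W.character (σ m) = (starRingEnd ℂ) (W.character m)) :
    ∀ (n : ℕ) (V : FDRep ℂ M), finrank ℂ V = n →
      ∑ m : M, V.character (σ m * m) = ∑ m : M, V.character m := by
  intro n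
  induction n using Nat.strong_induction_on with
  | _ n ih =>
    intro V hV
    by_cases hirr : ∀ p : Submodule ℂ V, Invt V p → p = ⊥ ∨ p = ⊤
    · rcases irred_case σ V hirr with ⟨h1, h2, h3⟩ | h
      · exact absurd ⟨V, h2, h1, h3⟩ H
      · exact h
    · push_neg at hirr
      obtain ⟨p, hpinv, hpbot, hptop⟩ := hirr
      obtain ⟨q, hqinv, hcompl⟩ := exists_invt_compl V p hpinv
      have hq0 : q ≠ ⊥ := by
        intro h
        apply hptop
        have := hcompl.sup_eq_top
        rwa [h, sup_bot_eq] at this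
      have hrank : finrank ℂ p + finrank ℂ q = n := by
        rw [← hV]
        exact Submodule.finrank_add_eq_of_isCompl hcompl
      have hppos : finrank ℂ p ≠ 0 := fun h0 => hpbot (Submodule.finrank_eq_zero.mp h0)
      have hqpos : finrank ℂ q ≠ 0 := fun h0 => hq0 (Submodule.finrank_eq_zero.mp h0)
      have e1 : finrank ℂ p < n := by omega
      have e2 : finrank ℂ q < n := by omega
      have h1 := ih _ e1 (subrep V p hpinv) rfl
      have h2 := ih _ e2 (subrep V q hqinv) rfl
      have hsplit : ∀ f : M → M, ∑ m : M, V.character (f m) =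
          (∑ m : M, (subrep V p hpinv).character (f m)) +
          ∑ m : M, (subrep V q hqinv).character (f m) := by
        intro f
        rw [← Finset.sum_add_distrib]
        exact Finset.sum_congr rfl fun m _ => char_add_of_isCompl V hpinv hqinv hcompl (f m)
      have hg1 := hsplit (fun m => σ m * m)
      have hg2 := hsplit (fun m => m)
      rw [hg1, hg2, h1, h2]

/-- The finite-dimensional regular representation. -/
noncomputable def regρ : Representation ℂ M (M → ℂ) where
  toFun m := LinearMap.funLeft ℂ ℂ (fun n => m⁻¹ * n)
  map_one' := by
    apply LinearMap.ext
    intro f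
    funext i
    simp [LinearMap.funLeft_apply]
  map_mul' a c := by
    apply LinearMap.ext
    intro f
    funext i
    simp [LinearMap.funLeft_apply, mul_assoc]

noncomputable def regRep : FDRep ℂ M := FDRep.of regρ

open scoped Classical in
theorem regRep_char (m : M) :
    (regRep (M := M)).character m = if m = 1 then (Fintype.card M : ℂ) else 0 := by
  classical
  rw [char_eq_trace]
  show LinearMap.trace ℂ (M → ℂ) (regρ m) = _
  rw [LinearMap.trace_eq_matrix_trace ℂ (Pi.basisFun ℂ M), Matrix.trace]
  have hentry : ∀ i : M, (LinearMap.toMatrix (Pi.basisFun ℂ M) (Pi.basisFun ℂ M)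
      (regρ m)) i i = if m = 1 then 1 else 0 := by
    intro i
    rw [LinearMap.toMatrix_apply, Pi.basisFun_repr]
    show (Pi.single i (1 : ℂ) : M → ℂ) (m⁻¹ * i) = _
    rw [Pi.single_apply]
    have hiff : (m⁻¹ * i = i) ↔ m = 1 := by
      rw [mul_eq_right, inv_eq_one]
    simp [hiff]
  simp only [Matrix.diag]
  rw [Finset.sum_congr rfl fun i _ => hentry i]
  by_cases hm : m = 1 <;> simp [hm, Finset.card_univ]


end InvolutionChar


theorem exists_irr_char_conj_inverted_by_involution
    (G M : Type) [Group G] [Group M] [Fintype G] [Fintype M]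
    (φ : G →* MulAut M) (x : G)
    (hx : orderOf (QuotientGroup.mk x : G ⧸ φ.ker) = 2) :
    ∃ μ : M → ℂ, IsIrrChar M μ ∧ μ ≠ (fun _ => 1) ∧
      ∀ m : M, μ (φ x m) = (starRingEnd ℂ) (μ m) := by
  classical
  by_contra hcon
  -- basic facts about the automorphism σ = φ x
  set σ : M →* M := (φ x).toMonoidHom with hσ
  have hσapp : ∀ m : M, σ m = φ x m := fun m => rfl
  have hx2 : x ^ 2 ∈ φ.ker := by
    have h1 : (QuotientGroup.mk x : G ⧸ φ.ker) ^ 2 = 1 := by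
      rw [← hx]; exact pow_orderOf_eq_one _
    rwa [← QuotientGroup.mk_pow, QuotientGroup.eq_one_iff] at h1
  have hσ2 : ∀ m : M, φ x (φ x m) = m := by
    intro m
    have h1 : φ (x ^ 2) = 1 := MonoidHom.mem_ker.mp hx2
    have h2 : φ x * φ x = 1 := by rw [← sq, ← map_pow, h1]
    calc φ x (φ x m) = (φ x * φ x) m := rfl
      _ = m := by rw [h2]; rfl
  have hxne : φ x ≠ 1 := by
    intro h
    have h1 : (QuotientGroup.mk x : G ⧸ φ.ker) = 1 :=
      (QuotientGroup.eq_one_iff x).mpr (MonoidHom.mem_ker.mpr h)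
    rw [h1, orderOf_one] at hx
    omega
  obtain ⟨m₀, hm₀⟩ : ∃ m₀ : M, φ x m₀ ≠ m₀ := by
    by_contra hall
    push_neg at hall
    exact hxne (DFunLike.ext _ _ fun m => by rw [hall m]; rfl)
  set a : M := m₀⁻¹ * φ x m₀ with ha
  have ha1 : a ≠ 1 := by
    intro h
    exact hm₀ (inv_mul_eq_one.mp h).symm
  have haT : σ a * a = 1 := by
    have h1 : σ a = (φ x m₀)⁻¹ * m₀ := by
      rw [hσapp, ha, map_mul, map_inv, hσ2]
    rw [h1, ha]
    group
  -- the contradiction hypothesis in representation form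
  have H : ¬ ∃ W : FDRep ℂ M, Simple W ∧ W.character ≠ (fun _ => 1) ∧
      ∀ m : M, W.character (σ m) = (starRingEnd ℂ) (W.character m) := by
    rintro ⟨W, hsW, hne, hconj⟩
    exact hcon ⟨W.character, ⟨W, hsW, rfl⟩, hne, fun m => hconj m⟩
  have hkey := InvolutionChar.sum_char_eq σ H (Module.finrank ℂ (InvolutionChar.regRep (M := M))) (InvolutionChar.regRep (M := M)) rfl
  rw [Finset.sum_congr rfl fun m (_ : m ∈ Finset.univ) => InvolutionChar.regRep_char (σ m * m),
    Finset.sum_congr rfl fun m (_ : m ∈ Finset.univ) => InvolutionChar.regRep_char m] at hkey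
  have hrhs : ∑ m : M, (if m = 1 then (Fintype.card M : ℂ) else 0) = (Fintype.card M : ℂ) := by
    rw [Finset.sum_ite_eq' Finset.univ (1 : M) (fun _ => (Fintype.card M : ℂ))]
    simp
  set T : Finset M := Finset.univ.filter (fun m => σ m * m = 1) with hT
  have hlhs : ∑ m : M, (if σ m * m = 1 then (Fintype.card M : ℂ) else 0) =
      (T.card : ℂ) * (Fintype.card M : ℂ) := by
    rw [hT, ← Finset.sum_filter, Finset.sum_const, nsmul_eq_mul]
  rw [hlhs, hrhs] at hkey
  have hcard : (Fintype.card M : ℂ) ≠ 0 := by exact_mod_cast Fintype.card_ne_zero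
  have hT1 : (T.card : ℂ) = 1 := by
    have h1 : (T.card : ℂ) * (Fintype.card M : ℂ) = 1 * (Fintype.card M : ℂ) := by
      rw [one_mul]; exact hkey
    exact mul_right_cancel₀ hcard h1
  have hTcard : T.card = 1 := by exact_mod_cast hT1
  have hsub : ({1, a} : Finset M) ⊆ T := by
    intro y hy
    rw [Finset.mem_insert, Finset.mem_singleton] at hy
    rw [hT, Finset.mem_filter]
    rcases hy with rfl | rfl
    · exact ⟨Finset.mem_univ _, by simp⟩
    · exact ⟨Finset.mem_univ _, haT⟩
  have h2le : 2 ≤ T.card := by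
    have := Finset.card_le_card hsub
    rwa [Finset.card_pair (Ne.symm ha1)] at this
  omega
end
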